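/- Let K be a finite Eulerian poset with rank function ρ and P ≠ id_K a special projection. Then the induced subposet (K \ im(P)) ∪ {0̂} is graded with rank function ρ. -/

import Mathlib

open scoped Classical

/-- A special matching of a poset. -/
def IsSpecialMatching {K : Type*} [PartialOrder K] (M : K → K) : Prop :=
  (∀ x, M (M x) = x) ∧ (∀ x, M x ⋖ x ∨ x ⋖ M x) ∧
    (∀ x y : K, x ⋖ y → x ≠ M y → M x ≤ M y)

/-- The idempotent `P^M` associated with a special matching `M`. -/
noncomputable def PMmap {K : Type*} [PartialOrder K] (M : K → K) : K → K :=
  fun x => if M x ⋖ x then M x else x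

/-- The monoid `M^K ⊆ Or(K)` generated by the idempotents `P^M` for special
matchings `M` of `K`. -/
def specialMonoid (K : Type*) [PartialOrder K] : Submonoid (Function.End K) :=
  Submonoid.closure {f : Function.End K | ∃ M : K → K, IsSpecialMatching M ∧ f = PMmap M}

/-!
A special projection `P ≠ id` is a product of maps `P^M`, each of which moves `⊤` down, so
`P ⊤ < ⊤` and `⊤ ∉ im P`. Given `u < v` in `C` with `ρ v - ρ u > 1`, any coatom `w` of `[u, v]`
lying in `im P` satisfies `w = P w ≤ P v < v`, so `w = P v`. Hence if no coatom of `[u, v]` were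
in `C`, the interval `[u, v]` would have a single coatom. But in an Eulerian poset every interval
of length two is a diamond, so `[u, v]` has at least two coatoms.
-/

section SpecialMonoid

variable {K : Type*} [PartialOrder K]

lemma PMmap_le (M : K → K) (x : K) : PMmap M x ≤ x := by
  unfold PMmap
  split_ifs with h
  exacts [h.le, le_rfl]

lemma PMmap_top_lt_top [OrderTop K] {M : K → K} (hM : IsSpecialMatching M) :
    PMmap M ⊤ < ⊤ := by
  have hcov : M ⊤ ⋖ ⊤ := (hM.2.1 ⊤).resolve_right fun h => not_top_lt h.lt
  simpa [PMmap, hcov] using hcov.lt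

lemma le_self_of_mem_specialMonoid {P : Function.End K} (hP : P ∈ specialMonoid K) (x : K) :
    P x ≤ x := by
  induction hP using Submonoid.closure_induction generalizing x with
  | mem f hf =>
    obtain ⟨M, -, rfl⟩ := hf
    exact PMmap_le M x
  | one => exact le_rfl
  | mul f g _ _ hf hg => exact (hf (g x)).trans (hg x)

lemma eq_one_or_apply_top_lt_top_of_mem_specialMonoid [OrderTop K] {P : Function.End K}
    (hP : P ∈ specialMonoid K) : P = 1 ∨ P ⊤ < ⊤ := by
  induction hP using Submonoid.closure_induction with
  | mem f hf =>
    obtain ⟨M, hM, rfl⟩ := hf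
    exact Or.inr (PMmap_top_lt_top hM)
  | one => exact Or.inl rfl
  | mul f g hfmem _ hf hg =>
    rcases hg with rfl | hg
    · simpa only [mul_one] using hf
    · exact Or.inr ((le_self_of_mem_specialMonoid hfmem (g ⊤)).trans_lt hg)

end SpecialMonoid

section Order

variable {K : Type*} [PartialOrder K]

lemma eq_apply_of_covBy_of_mem_range {P : K → K} (hmono : Monotone P)
    (hidem : ∀ x, P (P x) = P x) (hle : ∀ x, P x ≤ x) {v w : K} (hv : v ∉ Set.range P)
    (hw : w ∈ Set.range P) (hwv : w ⋖ v) : w = P v := by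
  obtain ⟨x, rfl⟩ := hw
  have hPv : P v < v := (hle v).lt_of_ne fun h => hv ⟨v, h⟩
  have hwPv : P x ≤ P v := by simpa only [hidem] using hmono hwv.le
  exact hwPv.eq_of_not_lt fun h => hwv.2 h hPv

lemma covBy_of_lt_of_rank_eq_add_one {ρ : K → ℕ} (hρ : StrictMono ρ) {x y : K} (hxy : x < y)
    (hrank : ρ y = ρ x + 1) : x ⋖ y :=
  ⟨hxy, fun c hxc hcy => by have := hρ hxc; have := hρ hcy; omega⟩

end Order

section Eulerian

variable {K : Type*} [PartialOrder K] [Fintype K] {ρ : K → ℕ}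

lemma strictMono_of_covBy_add_one (hρ : ∀ x y : K, x ⋖ y → ρ y = ρ x + 1) : StrictMono ρ := by
  let := Fintype.toLocallyFiniteOrder (α := K)
  exact (strictMono_iff_forall_covBy ρ).2 fun a b h => by rw [hρ a b h]; omega

lemma card_Ioo_eq_two_of_rank_eq_add_two (hρ : ∀ x y : K, x ⋖ y → ρ y = ρ x + 1)
    (μ : K → K → ℤ) (hμ₁ : ∀ x : K, μ x x = 1)
    (hμ₂ : ∀ x y : K, x < y → μ x y = -∑ z ∈ Finset.univ.filter (fun z => x ≤ z ∧ z < y), μ x z)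
    (hEuler : ∀ x y : K, x ≤ y → μ x y = (-1) ^ (ρ y - ρ x))
    {x y : K} (hxy : x ≤ y) (hrank : ρ y = ρ x + 2) :
    (Finset.univ.filter fun z => x < z ∧ z < y).card = 2 := by
  have hmono := strictMono_of_covBy_add_one hρ
  set S := Finset.univ.filter fun z => x < z ∧ z < y
  have hxy' : x < y := hxy.lt_of_ne (by rintro rfl; omega)
  have hsplit : Finset.univ.filter (fun z => x ≤ z ∧ z < y) = insert x S := by
    ext z
    simp only [S, Finset.mem_filter, Finset.mem_univ, true_and, Finset.mem_insert]
    constructor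
    · rintro ⟨hxz, hzy⟩
      rcases hxz.eq_or_lt with rfl | hxz
      exacts [Or.inl rfl, Or.inr ⟨hxz, hzy⟩]
    · rintro (rfl | ⟨hxz, hzy⟩)
      exacts [⟨le_rfl, hxy'⟩, ⟨hxz.le, hzy⟩]
  have hmid : ∀ z ∈ S, μ x z = -1 := by
    intro z hz
    simp only [S, Finset.mem_filter, Finset.mem_univ, true_and] at hz
    have h₁ := hmono hz.1
    have h₂ := hmono hz.2
    rw [hEuler x z hz.1.le, show ρ z - ρ x = 1 by omega, pow_one]
  have hx : x ∉ S := by simp [S]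
  have key := hμ₂ x y hxy'
  rw [hEuler x y hxy, show ρ y - ρ x = 2 by omega, hsplit, Finset.sum_insert hx, hμ₁,
    Finset.sum_congr rfl hmid, Finset.sum_const, nsmul_eq_mul] at key
  norm_num at key
  omega

lemma exists_two_coatoms_of_eulerian (hρ : ∀ x y : K, x ⋖ y → ρ y = ρ x + 1)
    (μ : K → K → ℤ) (hμ₁ : ∀ x : K, μ x x = 1)
    (hμ₂ : ∀ x y : K, x < y → μ x y = -∑ z ∈ Finset.univ.filter (fun z => x ≤ z ∧ z < y), μ x z)
    (hEuler : ∀ x y : K, x ≤ y → μ x y = (-1) ^ (ρ y - ρ x))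
    {u v : K} (huv : u < v) (hgap : 1 < ρ v - ρ u) :
    ∃ w₁ w₂, w₁ ≠ w₂ ∧ u ≤ w₁ ∧ w₁ ⋖ v ∧ u ≤ w₂ ∧ w₂ ⋖ v := by
  have hmono := strictMono_of_covBy_add_one hρ
  obtain ⟨z, huz, hzv⟩ := exists_le_covBy_of_lt huv
  have huz' : u < z := huz.lt_of_ne (by rintro rfl; have := hρ u v hzv; omega)
  obtain ⟨z', huz', hz'z⟩ := exists_le_covBy_of_lt huz'
  have hcard := card_Ioo_eq_two_of_rank_eq_add_two hρ μ hμ₁ hμ₂ hEuler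
    (hz'z.lt.trans hzv.lt).le (by rw [hρ z v hzv, hρ z' z hz'z])
  obtain ⟨w₁, hw₁, w₂, hw₂, hne⟩ := Finset.one_lt_card.1 (hcard ▸ one_lt_two)
  simp only [Finset.mem_filter, Finset.mem_univ, true_and] at hw₁ hw₂
  have hcov : ∀ w, z' < w → w < v → w ⋖ v := fun w hz'w hwv =>
    covBy_of_lt_of_rank_eq_add_one hmono hwv
      (by have := hmono hz'w; have := hmono hwv; rw [hρ z v hzv, hρ z' z hz'z] at *; omega)
  exact ⟨w₁, w₂, hne, huz'.trans hw₁.1.le, hcov w₁ hw₁.1 hw₁.2,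
    huz'.trans hw₂.1.le, hcov w₂ hw₂.1 hw₂.2⟩

end Eulerian

theorem stmt_15_general {K : Type*} [PartialOrder K] [Fintype K] [OrderBot K] [OrderTop K]
    (ρ : K → ℕ) (hρ : ∀ x y : K, x ⋖ y → ρ y = ρ x + 1)
    (μK : K → K → ℤ)
    (hμK1 : ∀ x : K, μK x x = 1)
    (hμK2 : ∀ x y : K, x < y →
      μK x y = -∑ z ∈ Finset.univ.filter (fun z => x ≤ z ∧ z < y), μK x z)
    (hEuler : ∀ x y : K, x ≤ y → μK x y = (-1) ^ (ρ y - ρ x))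
    (P : Function.End K) (hmem : P ∈ specialMonoid K) (hidem : P * P = P)
    (hmono : Monotone (P : K → K))
    (hne : (P : K → K) ≠ id)
    (C : Set K) (hC : C = (Set.range (P : K → K))ᶜ ∪ {⊥}) :
    (⊤ ∈ C) ∧
    (∀ u ∈ C, ∀ v ∈ C, u < v → 1 < ρ v - ρ u → ∃ z ∈ C, u ≤ z ∧ z ⋖ v) := by
  subst hC
  have hfix : ∀ x, P (P x) = P x := fun x => congrFun hidem x
  have hle := le_self_of_mem_specialMonoid hmem
  have htop : P ⊤ < ⊤ := (eq_one_or_apply_top_lt_top_of_mem_specialMonoid hmem).resolve_left hne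
  refine ⟨Or.inl fun ⟨x, hx⟩ => htop.ne (by rw [← hx, hfix]), ?_⟩
  rintro u - v hv huv hgap
  have hv' : v ∉ Set.range P := hv.resolve_right fun h => not_lt_bot (h ▸ huv)
  by_contra! hcon
  have hcoatom : ∀ w, u ≤ w → w ⋖ v → w = P v := fun w huw hwv =>
    eq_apply_of_covBy_of_mem_range hmono hfix hle hv'
      (by by_contra h; exact hcon w (Or.inl h) huw hwv) hwv
  obtain ⟨w₁, w₂, hne, hu₁, h₁, hu₂, h₂⟩ :=
    exists_two_coatoms_of_eulerian hρ μK hμK1 hμK2 hEuler huv hgap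
  exact hne ((hcoatom w₁ hu₁ h₁).trans (hcoatom w₂ hu₂ h₂).symm)

/-- Let `K` be a finite Eulerian poset with rank function `ρ` and
`P ≠ id` a special projection. Then the induced subposet `(K \ im(P)) ∪ {⊥}` is graded
with rank function `ρ`: it contains `⊥` as minimum, has maximum `⊤`, and any `u < v`
in it with `ρ v - ρ u > 1` admit `z` in it with `u ≤ z ⋖ v`. -/
theorem stmt_15 {K : Type*} [PartialOrder K] [Fintype K] [OrderBot K] [OrderTop K]
    (ρ : K → ℕ) (hρbot : ρ ⊥ = 0) (hρ : ∀ x y : K, x ⋖ y → ρ y = ρ x + 1)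
    (μK : K → K → ℤ)
    (hμK1 : ∀ x : K, μK x x = 1)
    (hμK2 : ∀ x y : K, x < y →
      μK x y = -∑ z ∈ Finset.univ.filter (fun z => x ≤ z ∧ z < y), μK x z)
    (hμK3 : ∀ x y : K, ¬ x ≤ y → μK x y = 0)
    (hEuler : ∀ x y : K, x ≤ y → μK x y = (-1) ^ (ρ y - ρ x))
    (P : Function.End K) (hmem : P ∈ specialMonoid K) (hidem : P * P = P)
    (hreg : ∀ x : K, P x ≤ x) (hmono : Monotone (P : K → K))
    (hproj : ∀ x ∈ Set.range (P : K → K), ∀ y ∈ Set.range (P : K → K), x ≤ y →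
      ∃ a b : K, {z : K | x ≤ z ∧ z ≤ y ∧ P z = x} = Set.Icc a b)
    (hne : (P : K → K) ≠ id)
    (C : Set K) (hC : C = (Set.range (P : K → K))ᶜ ∪ {⊥}) :
    (⊤ ∈ C) ∧
    (∀ u ∈ C, ∀ v ∈ C, u < v → 1 < ρ v - ρ u → ∃ z ∈ C, u ≤ z ∧ z ⋖ v) :=
  stmt_15_general ρ hρ μK hμK1 hμK2 hEuler P hmem hidem hmono hne C hC
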